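/- Let L0 and L1 be relational languages and, for each t < 2, let K_t be a class of finite L_t-structures closed under isomorphism. If K0 and K1 both have the hereditary property and the amalgamation property, then the full product K0 ⊠ K1 has the amalgamation property. -/

import Mathlib

/- Definitions following "Products of Classes of Finite Structures"
   (Guingona, Parnes, Scow). -/

open CategoryTheory FirstOrder FirstOrder.Language FirstOrder.Language.Structure

universe u v w w' u0 v0 u1 v1

namespace ProductsPaper

instance graphIsRelational : Language.graph.IsRelational :=
  fun _ => inferInstanceAs (IsEmpty Empty)

/-- The induced structure on a subset, for a relational language. -/
instance setStructure (L : FirstOrder.Language.{u, v}) [L.IsRelational] {M : Type w}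
    [L.Structure M] (s : Set M) : L.Structure s where
  funMap f _ := isEmptyElim f
  RelMap R x := RelMap R fun i => (x i : M)

/-- A class of structures: a set of bundled structures (with universes in `Type 0`). -/
abbrev StructClass (L : FirstOrder.Language.{u, v}) := Set (Bundled.{0} L.Structure)

variable {L : FirstOrder.Language.{u, v}}

/-- Every member of the class is finite. -/
def AllFinite (K : StructClass L) : Prop := ∀ A ∈ K, Finite A

/-- The class is closed under isomorphism. -/
def IsoClosed (K : StructClass L) : Prop :=
  ∀ A ∈ K, ∀ B : Bundled.{0} L.Structure, Nonempty (A ≃[L] B) → B ∈ K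

/-- The class `K` is indivisible: for every `A ∈ K` and `k ≥ 2` there is `B ∈ K` such that
every `k`-coloring of `B` admits a monochromatic embedded copy of `A`. -/
def Indivisible (K : StructClass L) : Prop :=
  ∀ A ∈ K, ∀ k : ℕ, 2 ≤ k → ∃ B ∈ K, ∀ c : B → Fin k,
    ∃ f : A ↪[L] B, ∃ i : Fin k, ∀ a : A, c (f a) = i

/-- The joint embedding property. -/
def JEP (K : StructClass L) : Prop :=
  ∀ A ∈ K, ∀ B ∈ K, ∃ C ∈ K, Nonempty (A ↪[L] C) ∧ Nonempty (B ↪[L] C)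

/-- The amalgamation property. -/
def AP (K : StructClass L) : Prop :=
  ∀ (A B₀ B₁ : Bundled.{0} L.Structure), A ∈ K → B₀ ∈ K → B₁ ∈ K →
    ∀ (f₀ : A ↪[L] B₀) (f₁ : A ↪[L] B₁),
      ∃ C ∈ K, ∃ (g₀ : B₀ ↪[L] C) (g₁ : B₁ ↪[L] C), g₀.comp f₀ = g₁.comp f₁

/-- The strong (disjoint) amalgamation property. -/
def SAP (K : StructClass L) : Prop :=
  ∀ (A B₀ B₁ : Bundled.{0} L.Structure), A ∈ K → B₀ ∈ K → B₁ ∈ K →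
    ∀ (f₀ : A ↪[L] B₀) (f₁ : A ↪[L] B₁),
      ∃ C ∈ K, ∃ (g₀ : B₀ ↪[L] C) (g₁ : B₁ ↪[L] C), g₀.comp f₀ = g₁.comp f₁ ∧
        Set.range g₀ ∩ Set.range g₁ = Set.range (g₀.comp f₀)

/-- The hereditary property: every substructure (equivalently, subset, since the language is
relational) of a member of the class is a member of the class. -/
def HereditaryC [L.IsRelational] (K : StructClass L) : Prop :=
  ∀ A ∈ K, ∀ s : Set A, (⟨s, setStructure L s⟩ : Bundled.{0} L.Structure) ∈ K

/-- The age of a structure: the class of all finite structures embeddable in it. -/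
def ageC (L : FirstOrder.Language.{u, v}) (M : Type w) [L.Structure M] : StructClass L :=
  {A | Finite A ∧ Nonempty (A ↪[L] M)}

/-- The proper subsets of `{0, …, n-1}`, indexing a disjoint amalgamation problem. -/
abbrev ProperSub (n : ℕ) := {p : Finset (Fin n) // p ≠ Finset.univ}

lemma inter_ne_univ {n : ℕ} (p q : ProperSub n) : p.1 ∩ q.1 ≠ Finset.univ := by
  intro h
  apply p.2
  apply Finset.eq_univ_of_forall
  intro x
  have hx : x ∈ p.1 ∩ q.1 := by rw [h]; exact Finset.mem_univ x
  exact (Finset.mem_inter.mp hx).1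

/-- The intersection of two proper subsets of `Fin n`, as a proper subset. -/
def interP {n : ℕ} (p q : ProperSub n) : ProperSub n := ⟨p.1 ∩ q.1, inter_ne_univ p q⟩

/-- The disjoint `n`-amalgamation property: every disjoint amalgamation system indexed by the
proper subsets of `{0, …, n-1}` extends to a disjoint amalgamation system indexed by all
subsets of `{0, …, n-1}`, i.e., it admits a top structure `C ∈ K` together with embeddings
commuting with the given system and satisfying the disjointness condition. -/
def DisjointNAmalg (K : StructClass L) (n : ℕ) : Prop :=
  ∀ (A : ProperSub n → Bundled.{0} L.Structure)
    (f : ∀ p q : ProperSub n, p.1 ⊆ q.1 → (A p ↪[L] A q)),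
    (∀ p, A p ∈ K) →
    (∀ (p : ProperSub n) (h : p.1 ⊆ p.1), f p p h = Embedding.refl L (A p)) →
    (∀ (p q r : ProperSub n) (hpq : p.1 ⊆ q.1) (hqr : q.1 ⊆ r.1),
      f p r (hpq.trans hqr) = (f q r hqr).comp (f p q hpq)) →
    (∀ (p q r : ProperSub n) (hpr : p.1 ⊆ r.1) (hqr : q.1 ⊆ r.1),
      Set.range (f p r hpr) ∩ Set.range (f q r hqr)
        = Set.range (f (interP p q) r (Finset.inter_subset_left.trans hpr))) →
    ∃ C ∈ K, ∃ g : ∀ p : ProperSub n, A p ↪[L] C,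
      (∀ (p q : ProperSub n) (hpq : p.1 ⊆ q.1), (g q).comp (f p q hpq) = g p) ∧
      (∀ p q : ProperSub n,
        Set.range (g p) ∩ Set.range (g q) = Set.range (g (interP p q)))

section DSS

variable (L) [L.IsRelational]

/-- `qfClassSet L C0 c` is the set of elements `c'` such that the map fixing `C0`
pointwise and sending `c` to `c'` is an isomorphism from `C0 ∪ {c}` onto `C0 ∪ {c'}`. -/
def qfClassSet {C : Type w} [L.Structure C] (C0 : Set C) (c : C) : Set C :=
  {c' | c' ∉ C0 ∧ ∀ ⦃m : ℕ⦄ (R : L.Relations m) (x x' : Fin m → C),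
    (∀ i, (x i = c ∧ x' i = c') ∨ (x i ∈ C0 ∧ x' i = x i)) →
    (RelMap R x ↔ RelMap R x')}

/-- A class of structures is definably self-similar. -/
def DefinablySelfSimilar (K : StructClass L) : Prop :=
  ∀ A B C : Bundled.{0} L.Structure, A ∈ K → B ∈ K → C ∈ K →
    ∀ (f : A ↪[L] B) (C0 : Set C) (c : C), c ∉ C0 →
    ∀ g : A ↪[L] (qfClassSet L C0 c), ∃ D ∈ K, ∃ (j : C ↪[L] D)
      (h : B ↪[L] (qfClassSet L (⇑j '' C0) (j c))),
      ∀ a : A, (h (f a) : D) = j (g a : C)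

end DSS

/-- The class `K` has exactly one singleton structure up to isomorphism. -/
def UniqueSingleton (K : StructClass L) : Prop :=
  (∃ A ∈ K, Nonempty A ∧ Subsingleton A) ∧
  (∀ A B : Bundled.{0} L.Structure, A ∈ K → B ∈ K →
    Nonempty A → Subsingleton A → Nonempty B → Subsingleton B → Nonempty (A ≃[L] B))

/-- Ultrahomogeneity: every embedding of a finite substructure extends to an automorphism. -/
def Ultrahomogeneous (L : FirstOrder.Language.{u, v}) [L.IsRelational] (M : Type w)
    [L.Structure M] : Prop :=
  ∀ s : Set M, s.Finite → ∀ f : s ↪[L] M, ∃ g : M ≃[L] M, ∀ x : s, g x = f x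

/-- The class has countably many structures up to isomorphism. -/
def EssentiallyCountable (K : StructClass L) : Prop :=
  ∃ S : StructClass L, S.Countable ∧ ∀ A ∈ K, ∃ B ∈ S, Nonempty (A ≃[L] B)

/-- A Fraïssé class: nonempty, countably many members up to isomorphism, hereditary,
with the joint embedding and amalgamation properties. -/
def FraisseClass [L.IsRelational] (K : StructClass L) : Prop :=
  K.Nonempty ∧ EssentiallyCountable K ∧ HereditaryC K ∧ JEP K ∧ AP K

/-- `M` is a Fraïssé limit of the class `K`: countable, ultrahomogeneous, with age `K`. -/
def IsFraisseLimitC [L.IsRelational] (K : StructClass L) (M : Type w) [L.Structure M] : Prop :=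
  Countable M ∧ Ultrahomogeneous L M ∧ ageC L M = K

variable {L0 : FirstOrder.Language.{u0, v0}} {L1 : FirstOrder.Language.{u1, v1}}

/-- The language of the lexicographic product: the disjoint union of the two languages plus a
new binary relation symbol `E` (the unique relation symbol of `Language.graph`). -/
def lexLang (L0 : FirstOrder.Language.{u0, v0}) (L1 : FirstOrder.Language.{u1, v1}) :
    FirstOrder.Language :=
  (L0.sum L1).sum Language.graph

/-- The language of the full product: the disjoint union of the two languages plus two
new binary relation symbols `E0` and `E1`. -/
def fullLang (L0 : FirstOrder.Language.{u0, v0}) (L1 : FirstOrder.Language.{u1, v1}) :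
    FirstOrder.Language :=
  (L0.sum L1).sum (Language.graph.sum Language.graph)

instance lexLangIsRelational [L0.IsRelational] [L1.IsRelational] :
    (lexLang L0 L1).IsRelational :=
  inferInstanceAs (((L0.sum L1).sum Language.graph).IsRelational)

instance fullLangIsRelational [L0.IsRelational] [L1.IsRelational] :
    (fullLang L0 L1).IsRelational :=
  inferInstanceAs (((L0.sum L1).sum (Language.graph.sum Language.graph)).IsRelational)

section Products

variable [L0.IsRelational] [L1.IsRelational]

/-- Interpretation of `L0` on a lexicographic product. -/
def lexStr0 {B : Type w} (A : B → Type w') [∀ b, L0.Structure (A b)] :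
    L0.Structure (Σ b, A b) where
  funMap f _ := isEmptyElim f
  RelMap {n} R x := ∃ (b : B) (a : Fin n → A b), (∀ i, x i = ⟨b, a i⟩) ∧ RelMap R a

/-- Interpretation of `L1` on a lexicographic product. -/
def lexStr1 {B : Type w} [L1.Structure B] (A : B → Type w') :
    L1.Structure (Σ b, A b) where
  funMap f _ := isEmptyElim f
  RelMap R x := RelMap R fun i => (x i).1

/-- Interpretation of the extra binary relation `E` on a lexicographic product. -/
def lexStrE {B : Type w} (A : B → Type w') : Language.graph.Structure (Σ b, A b) where
  funMap f _ := isEmptyElim f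
  RelMap {n} R := match n, R with
    | _, .adj => fun x => (x 0).1 = (x 1).1

/-- The lexicographic product of the structures `A b` along `B`. -/
def lexStr {B : Type w} [L1.Structure B] (A : B → Type w') [∀ b, L0.Structure (A b)] :
    (lexLang L0 L1).Structure (Σ b, A b) :=
  @Language.sumStructure _ _ _
    (@Language.sumStructure _ _ _ (lexStr0 A) (lexStr1 A)) (lexStrE A)

/-- The lexicographic product `A ≀ B` of two structures (as a type). -/
def lexProd (L0 : FirstOrder.Language.{u0, v0}) (L1 : FirstOrder.Language.{u1, v1})
    (A : Type w) (B : Type w') : Type max w w' :=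
  Σ _ : B, A

instance lexProdStr (A : Type w) (B : Type w') [L0.Structure A] [L1.Structure B] :
    (lexLang L0 L1).Structure (lexProd L0 L1 A B) :=
  lexStr fun _ : B => A

/-- The lexicographic product of a family of bundled structures along a bundled structure. -/
def lexBundle (B : Bundled.{0} L1.Structure) (A : B → Bundled.{0} L0.Structure) :
    Bundled.{0} (lexLang L0 L1).Structure :=
  ⟨Σ b : B, A b, lexStr fun b => (A b : Type)⟩

/-- The lexicographic product of two classes of structures. -/
def lexClass (K0 : StructClass L0) (K1 : StructClass L1) : StructClass (lexLang L0 L1) :=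
  {C | ∃ B ∈ K1, ∃ A : B → Bundled.{0} L0.Structure, (∀ b, A b ∈ K0) ∧
    Nonempty (C ≃[lexLang L0 L1] lexBundle B A)}

/-- Interpretation of `L0` on a full product. -/
def fullStr0 (A : Type w) (B : Type w') [L0.Structure A] : L0.Structure (A × B) where
  funMap f _ := isEmptyElim f
  RelMap R x := RelMap R fun i => (x i).1

/-- Interpretation of `L1` on a full product. -/
def fullStr1 (A : Type w) (B : Type w') [L1.Structure B] : L1.Structure (A × B) where
  funMap f _ := isEmptyElim f
  RelMap R x := RelMap R fun i => (x i).2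

/-- Interpretation of `E0` on a full product. -/
def fullStrE0 (A : Type w) (B : Type w') : Language.graph.Structure (A × B) where
  funMap f _ := isEmptyElim f
  RelMap {n} R := match n, R with
    | _, .adj => fun x => (x 0).1 = (x 1).1

/-- Interpretation of `E1` on a full product. -/
def fullStrE1 (A : Type w) (B : Type w') : Language.graph.Structure (A × B) where
  funMap f _ := isEmptyElim f
  RelMap {n} R := match n, R with
    | _, .adj => fun x => (x 0).2 = (x 1).2

/-- The full product `A ⊠ B` of two structures, as a structure on `A × B`. -/
def fullStr (A : Type w) (B : Type w') [L0.Structure A] [L1.Structure B] :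
    (fullLang L0 L1).Structure (A × B) :=
  @Language.sumStructure _ _ _
    (@Language.sumStructure _ _ _ (fullStr0 A B) (fullStr1 A B))
    (@Language.sumStructure _ _ _ (fullStrE0 A B) (fullStrE1 A B))

/-- The full product `A ⊠ B` of two structures (as a type). -/
def fullProd (L0 : FirstOrder.Language.{u0, v0}) (L1 : FirstOrder.Language.{u1, v1})
    (A : Type w) (B : Type w') : Type max w w' :=
  A × B

instance fullProdStr (A : Type w) (B : Type w') [L0.Structure A] [L1.Structure B] :
    (fullLang L0 L1).Structure (fullProd L0 L1 A B) :=
  fullStr A B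

/-- The full product of two bundled structures. -/
def fullBundle (A : Bundled.{0} L0.Structure) (B : Bundled.{0} L1.Structure) :
    Bundled.{0} (fullLang L0 L1).Structure :=
  ⟨A × B, fullStr A B⟩

/-- The full product of two classes of structures. -/
def fullClass (K0 : StructClass L0) (K1 : StructClass L1) : StructClass (fullLang L0 L1) :=
  {C | Finite C ∧ ∃ A ∈ K0, ∃ B ∈ K1, Nonempty (C ↪[fullLang L0 L1] fullBundle A B)}

end Products

/-- The free superposition of two classes of structures: all finite structures in the disjoint
union language whose reducts to the two languages lie in the respective classes. -/
def freeClass (K0 : StructClass L0) (K1 : StructClass L1) : StructClass (L0.sum L1) :=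
  {C | Finite C ∧
    (⟨C, (LHom.sumInl (L := L0) (L' := L1)).reduct C⟩ : Bundled.{0} L0.Structure) ∈ K0 ∧
    (⟨C, (LHom.sumInr (L := L0) (L' := L1)).reduct C⟩ : Bundled.{0} L1.Structure) ∈ K1}

/-- A configuration of the class `K` into `M^n`: an interpretation of the relation symbols of
`L0` as `L`-formulas with parameters from `M`, together with maps `f_A : A → M^n` for `A ∈ K`,
such that each relation of each `A ∈ K` is defined by the corresponding formula. -/
structure Config (L0 : FirstOrder.Language.{u0, v0}) (K : StructClass L0)
    (L : FirstOrder.Language.{u, v}) (M : Type w) [L.Structure M] (n : ℕ) where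
  I : ∀ {m : ℕ}, L0.Relations m → L.Formula ((Fin m × Fin n) ⊕ M)
  f : ∀ (A : Bundled.{0} L0.Structure), A ∈ K → A → Fin n → M
  compat : ∀ (A : Bundled.{0} L0.Structure) (hA : A ∈ K) {m : ℕ} (R : L0.Relations m)
      (a : Fin m → A),
    RelMap R a ↔ (I R).Realize (Sum.elim (fun p => f A hA (a p.1) p.2) id)

/-- A configuration is injective if all the maps `f_A` are injective. -/
def Config.Injective {K : StructClass L0} {L : FirstOrder.Language.{u, v}} {M : Type w}
    [L.Structure M] {n : ℕ} (c : Config L0 K L M n) : Prop :=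
  ∀ (A : Bundled.{0} L0.Structure) (hA : A ∈ K), Function.Injective (c.f A hA)

/-- A complete theory `T` admits a `K`-configuration if some model of `T` admits a
`K`-configuration into some finite power. -/
def AdmitsConfig (K : StructClass L0) {L : FirstOrder.Language.{u, v}} (T : L.Theory) : Prop :=
  ∃ (M : Type max u v) (_ : L.Structure M), M ⊨ T ∧ ∃ n : ℕ, Nonempty (Config L0 K L M n)

/-- `T` has an infinite model. -/
def HasInfiniteModel {L : FirstOrder.Language.{u, v}} (T : L.Theory) : Prop :=
  ∃ (M : Type max u v) (_ : L.Structure M), M ⊨ T ∧ Infinite M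

/-- The binary relation of a `Language.graph`-structure. -/
def rel2 {M : Type w} [Language.graph.Structure M] (x y : M) : Prop :=
  RelMap Language.adj ![x, y]

/-- The class of all finite strict partial orders. -/
def POClass : StructClass Language.graph :=
  {A | Finite A ∧ (∀ x : A, ¬ rel2 x x) ∧ ∀ x y z : A, rel2 x y → rel2 y z → rel2 x z}

/-- The class of all finite tournaments. -/
def TournClass : StructClass Language.graph :=
  {A | Finite A ∧ (∀ x : A, ¬ rel2 x x) ∧ ∀ x y : A, x ≠ y → Xor' (rel2 x y) (rel2 y x)}

/-- The class of all finite directed graphs. -/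
def DGClass : StructClass Language.graph :=
  {A | Finite A ∧ ∀ x : A, ¬ rel2 x x}

/-- The class of all finite (simple) graphs. -/
def GClass : StructClass Language.graph :=
  {A | Finite A ∧ (∀ x : A, ¬ rel2 x x) ∧ ∀ x y : A, rel2 x y → rel2 y x}

/-!
An amalgamation problem `B₀ ← A → B₁` in `K0 ⊠ K1`, with `Bᵢ ⊆ Aᵢ ⊠ Dᵢ`, splits into one
problem per coordinate. The first coordinates of the images of `A` in `A₀` and in `A₁` carry
the same `L0`-structure and the same equalities, since both are recorded by the `L0`-relations
and by `E0` on `A`; so they span isomorphic substructures, which lie in `K0` by heredity, and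
amalgamation in `K0` gives `C` with `A₀, A₁ ↪ C` agreeing on `A`. Likewise the second
coordinates give `D ∈ K1`. Both `Bᵢ` then embed into `C ⊠ D` compatibly, and the finite
substructure spanned by their images is the amalgam.
-/

section SetStructure

variable {L : FirstOrder.Language.{u, v}} [L.IsRelational] {M : Type*} {N : Type*}
  [L.Structure M] [L.Structure N]

def setSubtype (s : Set M) : s ↪[L] M where
  toFun := Subtype.val
  inj' := Subtype.val_injective
  map_fun' f := isEmptyElim f
  map_rel' _ _ := Iff.rfl

def codRestrictSet (f : N ↪[L] M) (s : Set M) (h : ∀ x, f x ∈ s) : N ↪[L] s where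
  toFun x := ⟨f x, h x⟩
  inj' _ _ hxy := f.injective (congrArg Subtype.val hxy)
  map_fun' g := isEmptyElim g
  map_rel' R x := f.map_rel R x

theorem exists_embedding_range_of_relMap_iff {X : Type*} (π₀ : X → M) (π₁ : X → N)
    (hrel : ∀ {n : ℕ} (R : L.Relations n) (x : Fin n → X),
      RelMap R (π₀ ∘ x) ↔ RelMap R (π₁ ∘ x))
    (heq : ∀ x x' : X, π₀ x = π₀ x' ↔ π₁ x = π₁ x') :
    ∃ φ : Set.range π₀ ↪[L] N, ∀ x, φ ⟨π₀ x, x, rfl⟩ = π₁ x := by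
  have hsec : ∀ z, π₀ (Set.rangeSplitting π₀ z) = z := Set.apply_rangeSplitting π₀
  refine ⟨{ toFun := π₁ ∘ Set.rangeSplitting π₀
            inj' := fun z z' hzz' => Subtype.ext ?_
            map_fun' := fun f => isEmptyElim f
            map_rel' := fun R z => ?_ }, fun x => (heq _ _).mp (hsec _)⟩
  · rw [← hsec z, ← hsec z', (heq _ _).mpr hzz']
  · change RelMap R (π₁ ∘ Set.rangeSplitting π₀ ∘ z) ↔ RelMap R (fun i => (z i : M))
    rw [← hrel]
    exact iff_of_eq (congrArg _ (funext fun i => hsec (z i)))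

end SetStructure

theorem AP.exists_amalgam_of_relMap_iff {L : FirstOrder.Language.{u, v}} [L.IsRelational]
    {K : StructClass L} (hher : HereditaryC K) (hap : AP K) {X : Type*}
    {A₀ A₁ : Bundled.{0} L.Structure} (hA₀ : A₀ ∈ K) (hA₁ : A₁ ∈ K)
    (π₀ : X → A₀) (π₁ : X → A₁)
    (hrel : ∀ {n : ℕ} (R : L.Relations n) (x : Fin n → X),
      RelMap R (π₀ ∘ x) ↔ RelMap R (π₁ ∘ x))
    (heq : ∀ x x' : X, π₀ x = π₀ x' ↔ π₁ x = π₁ x') :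
    ∃ C ∈ K, ∃ (h₀ : A₀ ↪[L] C) (h₁ : A₁ ↪[L] C), ∀ x, h₀ (π₀ x) = h₁ (π₁ x) := by
  obtain ⟨φ, hφ⟩ := exists_embedding_range_of_relMap_iff π₀ π₁ hrel heq
  obtain ⟨C, hC, h₀, h₁, hcomm⟩ :=
    hap ⟨_, setStructure L (Set.range π₀)⟩ A₀ A₁ (hher A₀ hA₀ _) hA₀ hA₁ (setSubtype _) φ
  refine ⟨C, hC, h₀, h₁, fun x => ?_⟩
  rw [← hφ x]
  exact DFunLike.congr_fun hcomm ⟨π₀ x, x, rfl⟩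

namespace fullLang

variable (L0 : FirstOrder.Language.{u0, v0}) (L1 : FirstOrder.Language.{u1, v1})

abbrev rel0 {n : ℕ} (R : L0.Relations n) : (fullLang L0 L1).Relations n :=
  Sum.inl (Sum.inl R)

abbrev rel1 {n : ℕ} (R : L1.Relations n) : (fullLang L0 L1).Relations n :=
  Sum.inl (Sum.inr R)

abbrev E0 : (fullLang L0 L1).Relations 2 := Sum.inr (Sum.inl .adj)

abbrev E1 : (fullLang L0 L1).Relations 2 := Sum.inr (Sum.inr .adj)

end fullLang

section FullProduct

variable {L0 : FirstOrder.Language.{u0, v0}} {L1 : FirstOrder.Language.{u1, v1}}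
  [L0.IsRelational] [L1.IsRelational]

variable {M : Type*} [(fullLang L0 L1).Structure M]
  {A C : Bundled.{0} L0.Structure} {B D : Bundled.{0} L1.Structure}
  (c : M ↪[fullLang L0 L1] fullBundle A B)

theorem relMap_comp_fst_iff {n : ℕ} (R : L0.Relations n) (x : Fin n → M) :
    RelMap R (fun i => (c (x i)).1) ↔ RelMap (fullLang.rel0 L0 L1 R) x :=
  c.map_rel (fullLang.rel0 L0 L1 R) x

theorem relMap_comp_snd_iff {n : ℕ} (R : L1.Relations n) (x : Fin n → M) :
    RelMap R (fun i => (c (x i)).2) ↔ RelMap (fullLang.rel1 L0 L1 R) x :=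
  c.map_rel (fullLang.rel1 L0 L1 R) x

theorem fst_eq_fst_iff (x y : M) :
    (c x).1 = (c y).1 ↔ RelMap (fullLang.E0 L0 L1) ![x, y] :=
  c.map_rel (fullLang.E0 L0 L1) ![x, y]

theorem snd_eq_snd_iff (x y : M) :
    (c x).2 = (c y).2 ↔ RelMap (fullLang.E1 L0 L1) ![x, y] :=
  c.map_rel (fullLang.E1 L0 L1) ![x, y]

def fullBundleMap (h : A ↪[L0] C) (k : B ↪[L1] D) :
    fullBundle A B ↪[fullLang L0 L1] fullBundle C D where
  toFun p := ((h p.1, k p.2) : C × D)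
  inj' _ _ hpq := Prod.ext (h.injective (congrArg Prod.fst hpq))
    (k.injective (congrArg Prod.snd hpq))
  map_fun' f := isEmptyElim f
  map_rel' := fun {n} R x => by
    rcases R with (R | R) | (R | R)
    · exact h.map_rel R fun i => (x i).1
    · exact k.map_rel R fun i => (x i).2
    · cases R
      exact h.injective.eq_iff
    · cases R
      exact k.injective.eq_iff

theorem setBundle_mem_fullClass {K0 : StructClass L0} {K1 : StructClass L1}
    (hC : C ∈ K0) (hD : D ∈ K1) {s : Set (fullBundle C D)} (hs : s.Finite) :
    (⟨s, setStructure _ s⟩ : Bundled.{0} (fullLang L0 L1).Structure) ∈ fullClass K0 K1 :=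
  ⟨hs.to_subtype, C, hC, D, hD, ⟨setSubtype s⟩⟩

end FullProduct

theorem stmt5_general (L0 : FirstOrder.Language.{u0, v0}) (L1 : FirstOrder.Language.{u1, v1})
    [L0.IsRelational] [L1.IsRelational]
    (K0 : StructClass L0) (K1 : StructClass L1)
    (hher0 : HereditaryC K0) (hher1 : HereditaryC K1)
    (hap0 : AP K0) (hap1 : AP K1) :
    AP (fullClass K0 K1) := by
  rintro A B₀ B₁ - ⟨hB₀, A₀, hA₀, D₀, hD₀, ⟨e₀⟩⟩ ⟨hB₁, A₁, hA₁, D₁, hD₁, ⟨e₁⟩⟩ f₀ f₁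
  obtain ⟨C, hC, h₀, h₁, hh⟩ := hap0.exists_amalgam_of_relMap_iff hher0 hA₀ hA₁
    (fun a => (e₀ (f₀ a)).1) (fun a => (e₁ (f₁ a)).1)
    (fun R x => (relMap_comp_fst_iff (e₀.comp f₀) R x).trans
      (relMap_comp_fst_iff (e₁.comp f₁) R x).symm)
    (fun a a' => (fst_eq_fst_iff (e₀.comp f₀) a a').trans
      (fst_eq_fst_iff (e₁.comp f₁) a a').symm)
  obtain ⟨D, hD, k₀, k₁, hk⟩ := hap1.exists_amalgam_of_relMap_iff hher1 hD₀ hD₁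
    (fun a => (e₀ (f₀ a)).2) (fun a => (e₁ (f₁ a)).2)
    (fun R x => (relMap_comp_snd_iff (e₀.comp f₀) R x).trans
      (relMap_comp_snd_iff (e₁.comp f₁) R x).symm)
    (fun a a' => (snd_eq_snd_iff (e₀.comp f₀) a a').trans
      (snd_eq_snd_iff (e₁.comp f₁) a a').symm)
  let G₀ := (fullBundleMap h₀ k₀).comp e₀
  let G₁ := (fullBundleMap h₁ k₁).comp e₁
  have : Finite B₀ := hB₀
  have : Finite B₁ := hB₁
  let S := Set.range G₀ ∪ Set.range G₁
  refine ⟨_, setBundle_mem_fullClass hC hD ((Set.finite_range G₀).union (Set.finite_range G₁)),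
    codRestrictSet G₀ S fun b => Or.inl ⟨b, rfl⟩, codRestrictSet G₁ S fun b => Or.inr ⟨b, rfl⟩,
    Embedding.ext fun a => Subtype.ext (Prod.ext (hh a) (hk a))⟩

/-- full products preserve amalgamation (given heredity). -/
theorem stmt5 (L0 : FirstOrder.Language.{u0, v0}) (L1 : FirstOrder.Language.{u1, v1})
    [L0.IsRelational] [L1.IsRelational]
    (K0 : StructClass L0) (K1 : StructClass L1)
    (hfin0 : AllFinite K0) (hiso0 : IsoClosed K0)
    (hfin1 : AllFinite K1) (hiso1 : IsoClosed K1)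
    (hher0 : HereditaryC K0) (hher1 : HereditaryC K1)
    (hap0 : AP K0) (hap1 : AP K1) :
    AP (fullClass K0 K1) :=
  stmt5_general L0 L1 K0 K1 hher0 hher1 hap0 hap1

end ProductsPaper
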